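/- Let f : I → ℝ³ be a unit speed timelike curve on S²₁ with 0 ∈ I, let a > 0 and ξ ∈ (−π/2, π/2) be constants with 1 + tan ξ·κ_g(v) > 0 for all v, and let γ̃(v) = a∫₀^v f(t)dt + a·tan ξ·∫₀^v f(t) ×ₗ f'(t) dt. Define the Frenet frame of γ̃ in the parameter v by T(v) = γ̃'(v)/‖γ̃'(v)‖, N(v) = γ̃''(v)/‖γ̃''(v)‖, B(v) = T(v) ×ₗ N(v), and let κ(v) = cos²ξ·(1 + tan ξ·κ_g(v))/a, τ(v) = cos²ξ·(κ_g(v) − tan ξ)/a. Then the normalized Darboux vector of γ̃ equals the pseudo-spherical evolute of f: (τ(v)T(v) − κ(v)B(v)) / ‖τ(v)T(v) − κ(v)B(v)‖ = (κ_g(v)f(v) − s(v))/√(κ_g(v)² + 1) for all v ∈ I. -/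

import Mathlib

noncomputable section

/-- Minkowski inner product ⟪x,y⟫ = x₁y₁ + x₂y₂ − x₃y₃ on ℝ³. -/
def mdot (x y : Fin 3 → ℝ) : ℝ := x 0 * y 0 + x 1 * y 1 - x 2 * y 2

/-- Lorentzian cross product x ×ₗ y. -/
def lcross (x y : Fin 3 → ℝ) : Fin 3 → ℝ :=
  ![x 1 * y 2 - x 2 * y 1, x 2 * y 0 - x 0 * y 2, x 1 * y 0 - x 0 * y 1]

/-- Determinant of the 3×3 matrix with rows x, y, z. -/
def det3 (x y z : Fin 3 → ℝ) : ℝ :=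
  x 0 * (y 1 * z 2 - y 2 * z 1) - x 1 * (y 0 * z 2 - y 2 * z 0) + x 2 * (y 0 * z 1 - y 1 * z 0)

/-- Minkowski norm ‖x‖ = √|⟪x,x⟫|. -/
def mnorm (x : Fin 3 → ℝ) : ℝ := Real.sqrt |mdot x x|

lemma mdot_comm (x y : Fin 3 → ℝ) : mdot x y = mdot y x := by simp [mdot]; ring

lemma mdot_lcross_left (x y : Fin 3 → ℝ) : mdot x (lcross x y) = 0 := by
  simp [mdot, lcross]; ring

lemma mdot_lcross_right (x y : Fin 3 → ℝ) : mdot y (lcross x y) = 0 := by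
  simp [mdot, lcross]; ring

lemma mdot_lcross_eq_det3 (x y z : Fin 3 → ℝ) : mdot (lcross x y) z = det3 x y z := by
  simp [mdot, lcross, det3]; ring

lemma mdot_lcross_lcross (x y : Fin 3 → ℝ) :
    mdot (lcross x y) (lcross x y) = mdot x y ^ 2 - mdot x x * mdot y y := by
  simp [mdot, lcross]; ring

lemma det3_lcross_self (x y : Fin 3 → ℝ) :
    det3 x y (lcross x y) = mdot x y ^ 2 - mdot x x * mdot y y := by
  simp [det3, lcross, mdot]; ring

lemma lcross_lcross_left (x y : Fin 3 → ℝ) :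
    lcross x (lcross x y) = mdot x x • y - mdot x y • x := by
  funext i; fin_cases i <;> simp [lcross, mdot] <;> ring

lemma lcross_lcross_right (x y : Fin 3 → ℝ) :
    lcross (lcross x y) y = mdot y y • x - mdot x y • y := by
  funext i; fin_cases i <;> simp [lcross, mdot] <;> ring

lemma lcross_self (x : Fin 3 → ℝ) : lcross x x = 0 := by
  funext i; fin_cases i <;> simp [lcross] <;> ring

lemma lcross_smul_add_left (c d : ℝ) (x y z : Fin 3 → ℝ) :
    lcross (c • x + d • y) z = c • lcross x z + d • lcross y z := by
  funext i; fin_cases i <;> simp [lcross] <;> ring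

lemma lcross_add_smul_right (c : ℝ) (x y z : Fin 3 → ℝ) :
    lcross x (y + c • z) = lcross x y + c • lcross x z := by
  funext i; fin_cases i <;> simp [lcross] <;> ring

lemma mdot_sub_sub_smul (x r p S : Fin 3 → ℝ) (c : ℝ) :
    mdot x (r - p - c • S) = mdot x r - mdot x p - c * mdot x S := by
  simp [mdot]; ring

lemma mdot_smul_add_smul (a c : ℝ) (x y : Fin 3 → ℝ) :
    mdot (a • x + c • y) (a • x + c • y)
      = a ^ 2 * mdot x x + 2 * (a * c) * mdot x y + c ^ 2 * mdot y y := by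
  simp [mdot]; ring

lemma mdot_smul_sub (k : ℝ) (x y : Fin 3 → ℝ) :
    mdot (k • x - y) (k • x - y) = k ^ 2 * mdot x x - 2 * k * mdot x y + mdot y y := by
  simp [mdot]; ring

lemma mdot_smul_self (c : ℝ) (x : Fin 3 → ℝ) :
    mdot (c • x) (c • x) = c ^ 2 * mdot x x := by
  simp [mdot]; ring

lemma cramer_zero (p q S w : Fin 3 → ℝ) (hdet : det3 p q S = 1)
    (e1 : mdot p w = 0) (e2 : mdot q w = 0) (e3 : mdot S w = 0) : w = 0 := by
  simp only [mdot, det3] at hdet e1 e2 e3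
  funext i
  fin_cases i
  · show w 0 = 0
    linear_combination (q 1 * S 2 - q 2 * S 1) * e1 + (p 2 * S 1 - p 1 * S 2) * e2 +
      (p 1 * q 2 - p 2 * q 1) * e3 + (- w 0) * hdet
  · show w 1 = 0
    linear_combination (q 2 * S 0 - q 0 * S 2) * e1 + (p 0 * S 2 - p 2 * S 0) * e2 +
      (p 2 * q 0 - p 0 * q 2) * e3 + (- w 1) * hdet
  · show w 2 = 0
    linear_combination (q 1 * S 0 - q 0 * S 1) * e1 + (p 0 * S 1 - p 1 * S 0) * e2 +
      (p 1 * q 0 - p 0 * q 1) * e3 + (- w 2) * hdet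

lemma frenet (p q r : Fin 3 → ℝ) (h1 : mdot p p = 1) (h2 : mdot q q = -1)
    (h3 : mdot p q = 0) (h4 : mdot r q = 0) (h5 : mdot p r = 1) :
    r = p + det3 p q r • lcross p q := by
  have hSS : mdot (lcross p q) (lcross p q) = 1 := by
    rw [mdot_lcross_lcross, h1, h2, h3]; ring
  have hdet : det3 p q (lcross p q) = 1 := by
    rw [det3_lcross_self, h1, h2, h3]; ring
  have hSr : mdot (lcross p q) r = det3 p q r := mdot_lcross_eq_det3 p q r
  have e1 : mdot p (r - p - det3 p q r • lcross p q) = 0 := by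
    rw [mdot_sub_sub_smul, h5, h1, mdot_lcross_left]; ring
  have e2 : mdot q (r - p - det3 p q r • lcross p q) = 0 := by
    rw [mdot_sub_sub_smul, mdot_comm q r, mdot_comm q p, h4, h3, mdot_lcross_right]; ring
  have e3 : mdot (lcross p q) (r - p - det3 p q r • lcross p q) = 0 := by
    rw [mdot_sub_sub_smul, hSr, mdot_comm (lcross p q) p, mdot_lcross_left, hSS]; ring
  have hw := cramer_zero p q (lcross p q) _ hdet e1 e2 e3
  have : r - p - det3 p q r • lcross p q + (p + det3 p q r • lcross p q)
      = 0 + (p + det3 p q r • lcross p q) := by rw [hw]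
  simpa [sub_add_cancel] using this

lemma hasDerivAt_lcross {x y : ℝ → Fin 3 → ℝ} {x' y' : Fin 3 → ℝ} {v : ℝ}
    (hx : HasDerivAt x x' v) (hy : HasDerivAt y y' v) :
    HasDerivAt (fun u => lcross (x u) (y u)) (lcross x' (y v) + lcross (x v) y') v := by
  rw [hasDerivAt_pi] at hx hy ⊢
  intro i
  fin_cases i <;> simp only [lcross, Matrix.cons_val_zero, Matrix.cons_val_one,
    Matrix.head_cons, Matrix.cons_val_two, Matrix.tail_cons, Pi.add_apply, Fin.isValue]
  · have := (((hx 1).mul (hy 2)).sub ((hx 2).mul (hy 1)))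
    convert this using 1 <;> (try funext u) <;> simp <;> ring
  · have := (((hx 2).mul (hy 0)).sub ((hx 0).mul (hy 2)))
    convert this using 1 <;> (try funext u) <;> simp <;> ring
  · have := (((hx 1).mul (hy 0)).sub ((hx 0).mul (hy 1)))
    convert this using 1 <;> (try funext u) <;> simp <;> ring

lemma hasDerivAt_mdot {x y : ℝ → Fin 3 → ℝ} {x' y' : Fin 3 → ℝ} {v : ℝ}
    (hx : HasDerivAt x x' v) (hy : HasDerivAt y y' v) :
    HasDerivAt (fun u => mdot (x u) (y u)) (mdot x' (y v) + mdot (x v) y') v := by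
  rw [hasDerivAt_pi] at hx hy
  have := ((((hx 0).mul (hy 0)).add ((hx 1).mul (hy 1))).sub ((hx 2).mul (hy 2)))
  simp only [mdot]
  exact this.congr_deriv (by ring) |>.congr_of_eventuallyEq (Filter.Eventually.of_forall fun u => by simp)

/-- The normalized Darboux vector (Darboux indicatrix) of the spacelike Bertrand curve γ̃
equals the pseudo-spherical evolute of f:
(τ·T − κ·B)/‖τ·T − κ·B‖ = (κ_g·f − s)/√(κ_g² + 1) on I. -/
theorem stmt_16 (a b : ℝ) (f : ℝ → Fin 3 → ℝ)
    (hf : ContDiffOn ℝ (⊤ : ℕ∞) f (Set.Ioo a b))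
    (hsph : ∀ v ∈ Set.Ioo a b, mdot (f v) (f v) = 1)
    (htl : ∀ v ∈ Set.Ioo a b, mdot (deriv f v) (deriv f v) = -1)
    (h0 : (0 : ℝ) ∈ Set.Ioo a b)
    (t s : ℝ → Fin 3 → ℝ) (kg : ℝ → ℝ)
    (ht : t = fun w => deriv f w)
    (hs : s = fun w => lcross (f w) (t w))
    (hkg : kg = fun w => det3 (f w) (t w) (deriv t w))
    (A ξ : ℝ) (hA : 0 < A) (hξ : ξ ∈ Set.Ioo (-(Real.pi / 2)) (Real.pi / 2))
    (hpos : ∀ v ∈ Set.Ioo a b, 0 < 1 + Real.tan ξ * kg v)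
    (γ : ℝ → Fin 3 → ℝ)
    (hγ : ∀ v ∈ Set.Ioo a b,
      γ v = A • (∫ w in (0:ℝ)..v, f w)
          + (A * Real.tan ξ) • (∫ w in (0:ℝ)..v, lcross (f w) (deriv f w)))
    (Tg Nf Bg : ℝ → Fin 3 → ℝ)
    (hTg : ∀ v ∈ Set.Ioo a b, Tg v = (mnorm (deriv γ v))⁻¹ • deriv γ v)
    (hNf : ∀ v ∈ Set.Ioo a b, Nf v = (mnorm (deriv (deriv γ) v))⁻¹ • deriv (deriv γ) v)
    (hBg : ∀ v ∈ Set.Ioo a b, Bg v = lcross (Tg v) (Nf v))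
    (K T : ℝ → ℝ)
    (hK : K = fun v => Real.cos ξ ^ 2 * (1 + Real.tan ξ * kg v) / A)
    (hT : T = fun v => Real.cos ξ ^ 2 * (kg v - Real.tan ξ) / A) :
    ∀ v ∈ Set.Ioo a b,
      (mnorm (T v • Tg v - K v • Bg v))⁻¹ • (T v • Tg v - K v • Bg v)
        = (Real.sqrt (kg v ^ 2 + 1))⁻¹ • (kg v • f v - s v) := by
  have hIo : IsOpen (Set.Ioo a b) := isOpen_Ioo
  have hfc : ContinuousOn f (Set.Ioo a b) := hf.continuousOn
  have hf1 : ContDiffOn ℝ (⊤ : ℕ∞) (deriv f) (Set.Ioo a b) := hf.deriv_of_isOpen hIo (by simp)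
  have hf1c : ContinuousOn (deriv f) (Set.Ioo a b) := hf1.continuousOn
  have hfd : ∀ u ∈ Set.Ioo a b, HasDerivAt f (deriv f u) u := fun u hu =>
    ((hf.contDiffAt (hIo.mem_nhds hu)).differentiableAt (by simp)).hasDerivAt
  have hf1d : ∀ u ∈ Set.Ioo a b, HasDerivAt (deriv f) (deriv (deriv f) u) u := fun u hu =>
    ((hf1.contDiffAt (hIo.mem_nhds hu)).differentiableAt (by simp)).hasDerivAt
  have hg2c : ContinuousOn (fun w => lcross (f w) (deriv f w)) (Set.Ioo a b) := by
    apply continuousOn_pi.mpr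
    intro i
    fin_cases i
    · show ContinuousOn (fun w => f w 1 * deriv f w 2 - f w 2 * deriv f w 1) _
      exact (((continuous_apply (1 : Fin 3)).comp_continuousOn hfc).mul
        ((continuous_apply (2 : Fin 3)).comp_continuousOn hf1c)).sub
        (((continuous_apply (2 : Fin 3)).comp_continuousOn hfc).mul
        ((continuous_apply (1 : Fin 3)).comp_continuousOn hf1c))
    · show ContinuousOn (fun w => f w 2 * deriv f w 0 - f w 0 * deriv f w 2) _
      exact (((continuous_apply (2 : Fin 3)).comp_continuousOn hfc).mul
        ((continuous_apply (0 : Fin 3)).comp_continuousOn hf1c)).sub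
        (((continuous_apply (0 : Fin 3)).comp_continuousOn hfc).mul
        ((continuous_apply (2 : Fin 3)).comp_continuousOn hf1c))
    · show ContinuousOn (fun w => f w 1 * deriv f w 0 - f w 0 * deriv f w 1) _
      exact (((continuous_apply (1 : Fin 3)).comp_continuousOn hfc).mul
        ((continuous_apply (0 : Fin 3)).comp_continuousOn hf1c)).sub
        (((continuous_apply (0 : Fin 3)).comp_continuousOn hfc).mul
        ((continuous_apply (1 : Fin 3)).comp_continuousOn hf1c))
  have key1 : ∀ u ∈ Set.Ioo a b,
      HasDerivAt γ (A • f u + (A * Real.tan ξ) • lcross (f u) (deriv f u)) u := by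
    intro u hu
    have hsub : Set.uIcc (0:ℝ) u ⊆ Set.Ioo a b := Set.ordConnected_Ioo.uIcc_subset h0 hu
    have hint1 : IntervalIntegrable f MeasureTheory.volume 0 u :=
      (hfc.mono hsub).intervalIntegrable
    have hint2 : IntervalIntegrable (fun w => lcross (f w) (deriv f w)) MeasureTheory.volume 0 u :=
      (hg2c.mono hsub).intervalIntegrable
    have hm1 : StronglyMeasurableAtFilter f (nhds u) MeasureTheory.volume :=
      hfc.stronglyMeasurableAtFilter hIo u hu
    have hm2 : StronglyMeasurableAtFilter (fun w => lcross (f w) (deriv f w))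
        (nhds u) MeasureTheory.volume :=
      hg2c.stronglyMeasurableAtFilter hIo u hu
    have hd1 : HasDerivAt (fun x => ∫ w in (0:ℝ)..x, f w) (f u) u :=
      intervalIntegral.integral_hasDerivAt_right hint1 hm1 (hfc.continuousAt (hIo.mem_nhds hu))
    have hd2 : HasDerivAt (fun x => ∫ w in (0:ℝ)..x, lcross (f w) (deriv f w))
        (lcross (f u) (deriv f u)) u :=
      intervalIntegral.integral_hasDerivAt_right hint2 hm2 (hg2c.continuousAt (hIo.mem_nhds hu))
    exact ((hd1.const_smul A).add (hd2.const_smul (A * Real.tan ξ))).congr_of_eventuallyEq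
      (Filter.eventuallyEq_of_mem (hIo.mem_nhds hu) hγ)
  have hderiv1 : ∀ u ∈ Set.Ioo a b,
      deriv γ u = A • f u + (A * Real.tan ξ) • lcross (f u) (deriv f u) :=
    fun u hu => (key1 u hu).deriv
  have c3 : ∀ u ∈ Set.Ioo a b, mdot (f u) (deriv f u) = 0 := by
    intro u hu
    have h1 : HasDerivAt (fun w => mdot (f w) (f w))
        (mdot (deriv f u) (f u) + mdot (f u) (deriv f u)) u :=
      hasDerivAt_mdot (hfd u hu) (hfd u hu)
    have h2 : HasDerivAt (fun w => mdot (f w) (f w)) 0 u :=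
      (hasDerivAt_const u (1:ℝ)).congr_of_eventuallyEq
        (Filter.eventuallyEq_of_mem (hIo.mem_nhds hu) hsph)
    have h3 := h1.unique h2
    have h4 := mdot_comm (deriv f u) (f u)
    linarith
  intro v hv
  have hmem := hIo.mem_nhds hv
  have hsph' := hsph v hv
  have htl' := htl v hv
  have hc3 := c3 v hv
  have c4 : mdot (deriv (deriv f) v) (deriv f v) = 0 := by
    have h1 : HasDerivAt (fun w => mdot (deriv f w) (deriv f w))
        (mdot (deriv (deriv f) v) (deriv f v) + mdot (deriv f v) (deriv (deriv f) v)) v :=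
      hasDerivAt_mdot (hf1d v hv) (hf1d v hv)
    have h2 : HasDerivAt (fun w => mdot (deriv f w) (deriv f w)) 0 v :=
      (hasDerivAt_const v (-1:ℝ)).congr_of_eventuallyEq (Filter.eventuallyEq_of_mem hmem htl)
    have h3 := h1.unique h2
    have h4 := mdot_comm (deriv (deriv f) v) (deriv f v)
    linarith
  have c5 : mdot (f v) (deriv (deriv f) v) = 1 := by
    have h1 : HasDerivAt (fun w => mdot (f w) (deriv f w))
        (mdot (deriv f v) (deriv f v) + mdot (f v) (deriv (deriv f) v)) v :=
      hasDerivAt_mdot (hfd v hv) (hf1d v hv)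
    have h2 : HasDerivAt (fun w => mdot (f w) (deriv f w)) 0 v :=
      (hasDerivAt_const v (0:ℝ)).congr_of_eventuallyEq (Filter.eventuallyEq_of_mem hmem c3)
    have h3 := h1.unique h2
    linarith
  have hkgv : kg v = det3 (f v) (deriv f v) (deriv (deriv f) v) := by simp only [hkg, ht]
  have hsv : s v = lcross (f v) (deriv f v) := by simp only [hs, ht]
  have hfr : deriv (deriv f) v
      = f v + det3 (f v) (deriv f v) (deriv (deriv f) v) • lcross (f v) (deriv f v) :=
    frenet _ _ _ hsph' htl' hc3 c4 c5
  have hlc : lcross (f v) (deriv (deriv f) v) = kg v • deriv f v := by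
    rw [hkgv]
    set k0 := det3 (f v) (deriv f v) (deriv (deriv f) v) with hk0
    rw [hfr, lcross_add_smul_right, lcross_self, lcross_lcross_left, hsph', hc3]
    funext i; simp
  have hγ1d : HasDerivAt (fun u => A • f u + (A * Real.tan ξ) • lcross (f u) (deriv f u))
      (A • deriv f v + (A * Real.tan ξ)
        • (lcross (deriv f v) (deriv f v) + lcross (f v) (deriv (deriv f) v))) v :=
    ((hfd v hv).const_smul A).add
      ((hasDerivAt_lcross (hfd v hv) (hf1d v hv)).const_smul (A * Real.tan ξ))
  have hd2 : HasDerivAt (deriv γ)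
      (A • deriv f v + (A * Real.tan ξ)
        • (lcross (deriv f v) (deriv f v) + lcross (f v) (deriv (deriv f) v))) v :=
    hγ1d.congr_of_eventuallyEq (Filter.eventuallyEq_of_mem hmem hderiv1)
  have hd2' : deriv (deriv γ) v = (A * (1 + Real.tan ξ * kg v)) • deriv f v := by
    rw [hd2.deriv, lcross_self, hlc]
    funext i
    simp only [Pi.add_apply, Pi.smul_apply, Pi.zero_apply, smul_eq_mul]
    ring
  have hcos : 0 < Real.cos ξ := Real.cos_pos_of_mem_Ioo hξ
  have hBpos := hpos v hv
  have hABpos : 0 < A * (1 + Real.tan ξ * kg v) := mul_pos hA hBpos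
  have hm2 : mnorm (deriv (deriv γ) v) = A * (1 + Real.tan ξ * kg v) := by
    rw [hd2', mnorm, mdot_smul_self, htl']
    rw [show (A * (1 + Real.tan ξ * kg v)) ^ 2 * (-1)
        = -((A * (1 + Real.tan ξ * kg v)) ^ 2) by ring]
    rw [abs_neg, abs_of_nonneg (sq_nonneg _), Real.sqrt_sq hABpos.le]
  have hNfv : Nf v = deriv f v := by
    rw [hNf v hv, hm2, hd2', smul_smul, inv_mul_cancel₀ hABpos.ne', one_smul]
  have hd1v : deriv γ v = A • f v + (A * Real.tan ξ) • lcross (f v) (deriv f v) := hderiv1 v hv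
  have hSS : mdot (lcross (f v) (deriv f v)) (lcross (f v) (deriv f v)) = 1 := by
    rw [mdot_lcross_lcross, hsph', htl', hc3]; ring
  have hmd1 : mdot (deriv γ v) (deriv γ v) = (A / Real.cos ξ) ^ 2 := by
    rw [hd1v, mdot_smul_add_smul, hsph', hSS, mdot_lcross_left, Real.tan_eq_sin_div_cos]
    field_simp
    linear_combination Real.sin_sq_add_cos_sq ξ
  have hm1 : mnorm (deriv γ v) = A / Real.cos ξ := by
    rw [mnorm, hmd1, abs_of_nonneg (sq_nonneg _), Real.sqrt_sq (div_pos hA hcos).le]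
  have hTgv : Tg v = Real.cos ξ • f v + Real.sin ξ • lcross (f v) (deriv f v) := by
    rw [hTg v hv, hm1, hd1v]
    funext i
    simp only [Pi.add_apply, Pi.smul_apply, smul_eq_mul]
    rw [Real.tan_eq_sin_div_cos]
    field_simp
  have hST : lcross (lcross (f v) (deriv f v)) (deriv f v) = -f v := by
    rw [lcross_lcross_right, htl', hc3]
    funext i; simp
  have hBgv : Bg v = Real.cos ξ • lcross (f v) (deriv f v) - Real.sin ξ • f v := by
    rw [hBg v hv, hTgv, hNfv, lcross_smul_add_left, hST]
    funext i
    simp only [Pi.add_apply, Pi.sub_apply, Pi.smul_apply, Pi.neg_apply, smul_eq_mul]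
    ring
  have hKv : K v = Real.cos ξ ^ 2 * (1 + Real.tan ξ * kg v) / A := by rw [hK]
  have hTv : T v = Real.cos ξ ^ 2 * (kg v - Real.tan ξ) / A := by rw [hT]
  have hD : T v • Tg v - K v • Bg v
      = (Real.cos ξ / A) • (kg v • f v - lcross (f v) (deriv f v)) := by
    rw [hKv, hTv, hTgv, hBgv]
    funext i
    simp only [Pi.sub_apply, Pi.add_apply, Pi.smul_apply, smul_eq_mul]
    rw [Real.tan_eq_sin_div_cos]
    field_simp
    linear_combination (kg v * f v i - lcross (f v) (deriv f v) i) * Real.sin_sq_add_cos_sq ξ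
  have hmdD : mdot (kg v • f v - lcross (f v) (deriv f v))
      (kg v • f v - lcross (f v) (deriv f v)) = kg v ^ 2 + 1 := by
    rw [mdot_smul_sub, hsph', hSS, mdot_lcross_left]; ring
  have hcA : 0 < Real.cos ξ / A := div_pos hcos hA
  have hmD : mnorm (T v • Tg v - K v • Bg v)
      = (Real.cos ξ / A) * Real.sqrt (kg v ^ 2 + 1) := by
    rw [hD, mnorm, mdot_smul_self, hmdD, abs_of_nonneg (by positivity),
      Real.sqrt_mul (sq_nonneg _), Real.sqrt_sq hcA.le]
  have hs1 : 0 < Real.sqrt (kg v ^ 2 + 1) := Real.sqrt_pos.mpr (by positivity)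
  rw [hmD, hD, hsv, smul_smul]
  congr 1
  field_simp
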